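/- Let M = Σ_{i=0}^k ξ_i·D^i be an x-symmetry driver for the equation u_{xy} = F and let W ∈ 𝓕 be an x-integral. Write the composition W_* ∘ M in normal form Σ_i μ_i·D^i with μ_i ∈ R. Then D̄(μ_i) = 0 for every i (every coefficient is an x-integral); in particular the operator L = W_* ∘ M maps x-integrals to x-integrals. -/

import Mathlib

/-!
A symmetry `g` generates the evolutionary derivation `E_g`, acting as `Dⁱ g` on `uᵢ` and as
`D̄ⁱ g` on `ūᵢ`. The symmetry equation is exactly `E_g F = D D̄ g`; from this `E_g` commutes with
`D` on the polynomials in `x, y, ū₁, u₀, u₁, …` (where `F` and its `D`-derivatives live), and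
then with `D̄` everywhere. On `𝓕`, `E_g W = W_*(g)`. So for an x-integral `V` the symmetry
`g = M V` gives `D̄ (W_* (M V)) = E_g (D̄ W) = 0`. Finally the operator `Σ μᵢ Dⁱ` is tested on
the x-integrals `xⁿ`, which isolates the coefficients one at a time.
-/

open MvPolynomial

noncomputable section

/-- Variables of the ring R = K[x, y, u₀, u₁, …, ū₁, ū₂, …].
`Var.ubar j` denotes the variable ū_{j+1}, so that `Var.ubar 0 = ū₁`. -/
inductive Var : Type
  | x : Var
  | y : Var
  | u : ℕ → Var
  | ubar : ℕ → Var
  deriving DecidableEq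

/-- The ring R. -/
abbrev RR (K : Type*) [CommSemiring K] : Type _ := MvPolynomial Var K

variable {K : Type*} [Field K] [CharZero K]

/-- The subring 𝓕 ⊆ R of polynomials not involving any ū_j. -/
def Fcal (K : Type*) [CommSemiring K] : Subalgebra K (RR K) :=
  MvPolynomial.supported K {v : Var | ∀ j : ℕ, v ≠ Var.ubar j}

/-- The set of variables that F may involve: x, y, u₀, u₁, ū₁. -/
def Fvars : Set Var := {Var.x, Var.y, Var.u 0, Var.u 1, Var.ubar 0}

/-- `D` and `Dbar` are the total derivatives with respect to x and y on solutions
of u_{xy} = F, i.e. the K-derivations determined by mutual recursion by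
D(x) = 1, D(y) = 0, D(uᵢ) = u_{i+1}, D(ū_i) = D̄^{i-1}(F) (i ≥ 1);
D̄(y) = 1, D̄(x) = 0, D̄(u₀) = ū₁, D̄(u_i) = D^{i-1}(F) (i ≥ 1), D̄(ū_i) = ū_{i+1}.
(Recall `Var.ubar j` denotes ū_{j+1}.)  -/
structure IsTotalDerPair (F : RR K) (D Dbar : Derivation K (RR K) (RR K)) : Prop where
  hDx : D (X Var.x) = 1
  hDy : D (X Var.y) = 0
  hDu : ∀ i : ℕ, D (X (Var.u i)) = X (Var.u (i + 1))
  hDubar : ∀ j : ℕ, D (X (Var.ubar j)) = (⇑Dbar)^[j] F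
  hDbary : Dbar (X Var.y) = 1
  hDbarx : Dbar (X Var.x) = 0
  hDbaru0 : Dbar (X (Var.u 0)) = X (Var.ubar 0)
  hDbaru : ∀ i : ℕ, Dbar (X (Var.u (i + 1))) = (⇑D)^[i] F
  hDbarubar : ∀ j : ℕ, Dbar (X (Var.ubar j)) = X (Var.ubar (j + 1))

/-- `g` is a symmetry of the equation u_{xy} = F:
D(D̄(g)) − F_{u₁}·D(g) − F_{ū₁}·D̄(g) − F_{u₀}·g = 0. -/
def IsSymmetry (F : RR K) (D Dbar : Derivation K (RR K) (RR K)) (g : RR K) : Prop :=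
  D (Dbar g) - pderiv (Var.u 1) F * D g - pderiv (Var.ubar 0) F * Dbar g
    - pderiv (Var.u 0) F * g = 0

/-- The differential operator Σ_{i=0}^k ξ_i·Df^i applied to `a`. -/
def opApply {A : Type*} [CommRing A] (Df : A → A) (ξ : ℕ → A) (k : ℕ) (a : A) : A :=
  ∑ i ∈ Finset.range (k + 1), ξ i * Df^[i] a

/-- `ξ 0, …, ξ k` are the coefficients of an x-symmetry driver of order `k`:
`ξ k ≠ 0` and Σ ξ_i·D^i maps every x-integral to a symmetry. -/
def IsDriver (F : RR K) (D Dbar : Derivation K (RR K) (RR K)) (k : ℕ) (ξ : ℕ → RR K) : Prop :=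
  ξ k ≠ 0 ∧ ∀ W : RR K, Dbar W = 0 → IsSymmetry F D Dbar (opApply ⇑D ξ k W)

/-- The Fréchet derivative a_* = Σ_{i≥0} (∂a/∂uᵢ)·D^i applied to `g`. -/
def frechet (D : Derivation K (RR K) (RR K)) (a g : RR K) : RR K :=
  ∑ᶠ i : ℕ, pderiv (Var.u i) a * (⇑D)^[i] g

/-- The Lie bracket [f, g] = g_*(f) − f_*(g). -/
def lieBracket (D : Derivation K (RR K) (RR K)) (f g : RR K) : RR K :=
  frechet D g f - frechet D f g

set_option linter.unusedSectionVars false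

namespace Derivation

variable {R A : Type*} [CommRing R] [CommRing A] [Algebra R A]

theorem apply_comm_of_lie_eq_zero {δ₁ δ₂ : Derivation R A A} (h : ⁅δ₁, δ₂⁆ = 0) (a : A) :
    δ₁ (δ₂ a) = δ₂ (δ₁ a) :=
  sub_eq_zero.mp <| by rw [← commutator_apply, h, zero_apply]

theorem iterate_apply_pow_of_apply_eq_one (D : Derivation R A A) {x : A} (hx : D x = 1)
    (j n : ℕ) : (⇑D)^[j] (x ^ n) = (n.descFactorial j : A) * x ^ (n - j) := by
  induction j with
  | zero => simp
  | succ j ih =>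
    rw [Function.iterate_succ_apply', ih, leibniz, leibniz_pow, hx, map_natCast,
      Nat.descFactorial_succ, ← Nat.sub_sub]
    simp only [smul_eq_mul, nsmul_eq_mul, mul_one, mul_zero, add_zero]
    push_cast
    ring

/-- `Dⁱ (xⁿ)` is killed by `δ`, vanishes for `i > n` and equals `n!` for `i = n`, so testing on
`xⁿ` isolates `δ (μ n)` once the lower coefficients are known to be killed. -/
theorem apply_coeff_eq_zero_of_forall_apply_pow [IsDomain A] [CharZero A]
    (D δ : Derivation R A A) {x : A} (hDx : D x = 1) (hδx : δ x = 0) {m : ℕ} {μ : ℕ → A}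
    (h : ∀ n, δ (∑ i ∈ Finset.range (m + 1), μ i * (⇑D)^[i] (x ^ n)) = 0) :
    ∀ i ≤ m, δ (μ i) = 0 := by
  have hδ : ∀ j n, δ ((⇑D)^[j] (x ^ n)) = 0 := fun j n => by
    rw [D.iterate_apply_pow_of_apply_eq_one hDx, leibniz, leibniz_pow, hδx, map_natCast]
    simp
  intro n
  induction n using Nat.strong_induction_on with
  | _ n ih =>
    intro hn
    have hsum := h n
    rw [map_sum, Finset.sum_eq_single_of_mem n (Finset.mem_range.mpr (by omega))] at hsum
    · rw [leibniz, hδ, D.iterate_apply_pow_of_apply_eq_one hDx, Nat.descFactorial_self,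
        Nat.sub_self, pow_zero, mul_one, smul_zero, zero_add, smul_eq_mul] at hsum
      exact (mul_eq_zero.mp hsum).resolve_left (Nat.cast_ne_zero.mpr n.factorial_ne_zero)
    · intro i hi hin
      rw [leibniz, hδ, smul_zero, zero_add, smul_eq_mul]
      rcases hin.lt_or_gt with hlt | hgt
      · rw [ih i hlt (by have := Finset.mem_range.mp hi; omega), mul_zero]
      · rw [D.iterate_apply_pow_of_apply_eq_one hDx, Nat.descFactorial_eq_zero_iff_lt.mpr hgt,
          Nat.cast_zero, zero_mul, zero_mul]

end Derivation

theorem MvPolynomial.derivation_apply_eq_sum_pderiv_mul {σ R : Type*} [CommSemiring R]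
    (δ : Derivation R (MvPolynomial σ R) (MvPolynomial σ R)) {T : Finset σ}
    {p : MvPolynomial σ R} (hp : p.vars ⊆ T) :
    δ p = ∑ v ∈ T, pderiv v p * δ (X v) := by
  have hsum : ∀ q, (∑ v ∈ T, δ (X v) • (pderiv v : Derivation R _ _)) q
      = ∑ v ∈ T, δ (X v) * pderiv v q := fun q => by
    rw [← Derivation.coeFnAddMonoidHom_apply, map_sum, Finset.sum_apply]
    rfl
  have hδ : δ p = (∑ v ∈ T, δ (X v) • (pderiv v : Derivation R _ _)) p :=
    derivation_eq_of_forall_mem_vars fun v hv => by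
      rw [hsum, Finset.sum_eq_single_of_mem v (hp hv) fun w _ hwv => by
        rw [pderiv_X_of_ne (Ne.symm hwv), mul_zero], pderiv_X_self, mul_one]
  rw [hδ, hsum]
  exact Finset.sum_congr rfl fun v _ => mul_comm _ _

/-- The variables other than `ū₂, ū₃, …`: `F` and all its `D`-derivatives live on them. -/
def lowVars : Set Var := {v | ∀ j : ℕ, v ≠ Var.ubar (j + 1)}

theorem ubar_mem_lowVars_iff {j : ℕ} : Var.ubar j ∈ lowVars ↔ j = 0 := by
  refine ⟨fun hj => ?_, fun hj i => by simp [hj]⟩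
  by_contra hj0
  exact hj (j - 1) (by congr; omega)

theorem Fvars_subset_lowVars : Fvars ⊆ lowVars := by
  rintro v (rfl | rfl | rfl | rfl | rfl) j <;> simp

namespace IsTotalDerPair

variable {F : RR K} {D Dbar : Derivation K (RR K) (RR K)}

theorem lie_eq_zero (h : IsTotalDerPair F D Dbar) : ⁅D, Dbar⁆ = 0 := by
  refine derivation_ext fun v => ?_
  rw [Derivation.commutator_apply, Derivation.zero_apply, sub_eq_zero]
  cases v with
  | x => rw [h.hDbarx, h.hDx, map_zero, Derivation.map_one_eq_zero]
  | y => rw [h.hDbary, h.hDy, map_zero, Derivation.map_one_eq_zero]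
  | u i =>
    cases i with
    | zero => rw [h.hDbaru0, h.hDu, h.hDbaru 0, h.hDubar 0]; rfl
    | succ i => rw [h.hDbaru i, h.hDu, h.hDbaru (i + 1), Function.iterate_succ_apply']
  | ubar j => rw [h.hDbarubar j, h.hDubar j, h.hDubar (j + 1), Function.iterate_succ_apply']

theorem mapsTo_supported_lowVars (h : IsTotalDerPair F D Dbar)
    (hF : F ∈ supported K Fvars) :
    Set.MapsTo D (supported K lowVars) (supported K lowVars) := by
  intro p hp
  rw [SetLike.mem_coe, supported_eq_adjoin_X] at hp
  induction hp using Algebra.adjoin_induction with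
  | mem q hq =>
    obtain ⟨v, hv, rfl⟩ := hq
    cases v with
    | x => rw [h.hDx]; exact one_mem _
    | y => rw [h.hDy]; exact zero_mem _
    | u i => rw [h.hDu i]; exact X_mem_supported.mpr fun j => by simp
    | ubar j =>
      obtain rfl := ubar_mem_lowVars_iff.mp hv
      rw [h.hDubar 0]
      exact supported_mono Fvars_subset_lowVars hF
  | algebraMap r => rw [Derivation.map_algebraMap]; exact zero_mem _
  | add a b _ _ ha hb => rw [map_add]; exact add_mem ha hb
  | mul a b ha' hb' ha hb =>
    rw [Derivation.leibniz, smul_eq_mul, smul_eq_mul]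
    exact add_mem (mul_mem ha' hb) (mul_mem hb' ha)

end IsTotalDerPair

/-- The evolutionary derivation `E_g = Σ Dⁱ(g) ∂/∂uᵢ + Σ D̄ⁱ(g) ∂/∂ūᵢ` generated by `g`. -/
def evolutionaryDerivation (D Dbar : Derivation K (RR K) (RR K)) (g : RR K) :
    Derivation K (RR K) (RR K) :=
  mkDerivation K fun
    | .x => 0
    | .y => 0
    | .u i => (⇑D)^[i] g
    | .ubar j => (⇑Dbar)^[j + 1] g

namespace evolutionaryDerivation

variable {F : RR K} {D Dbar : Derivation K (RR K) (RR K)} {g : RR K}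

@[simp]
theorem apply_X_x : evolutionaryDerivation D Dbar g (X .x) = 0 := mkDerivation_X _ _ _

@[simp]
theorem apply_X_y : evolutionaryDerivation D Dbar g (X .y) = 0 := mkDerivation_X _ _ _

@[simp]
theorem apply_X_u (i : ℕ) : evolutionaryDerivation D Dbar g (X (.u i)) = (⇑D)^[i] g :=
  mkDerivation_X _ _ _

@[simp]
theorem apply_X_ubar (j : ℕ) :
    evolutionaryDerivation D Dbar g (X (.ubar j)) = (⇑Dbar)^[j + 1] g :=
  mkDerivation_X _ _ _

theorem apply_F (hF : F ∈ supported K Fvars) (hg : IsSymmetry F D Dbar g) :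
    evolutionaryDerivation D Dbar g F = D (Dbar g) := by
  have hT : F.vars ⊆ {.x, .y, .u 0, .u 1, .ubar 0} := fun v hv => by
    rcases mem_supported.mp hF hv with rfl | rfl | rfl | rfl | rfl <;> simp
  rw [derivation_apply_eq_sum_pderiv_mul _ hT]
  simp only [IsSymmetry] at hg
  simp only [Finset.mem_insert, reduceCtorEq, Finset.mem_singleton, or_self, not_false_eq_true,
    Finset.sum_insert, apply_X_x, mul_zero, apply_X_y, Var.u.injEq, zero_ne_one, apply_X_u,
    Function.iterate_zero, id_eq, Function.iterate_one, Finset.sum_singleton, apply_X_ubar,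
    zero_add]
  linear_combination -hg

theorem apply_D_of_mem_supported_lowVars (h : IsTotalDerPair F D Dbar)
    (hF : F ∈ supported K Fvars) (hg : IsSymmetry F D Dbar g) {p : RR K}
    (hp : p ∈ supported K lowVars) :
    evolutionaryDerivation D Dbar g (D p) = D (evolutionaryDerivation D Dbar g p) := by
  have hlie : ⁅evolutionaryDerivation D Dbar g, D⁆ p = (0 : Derivation K (RR K) (RR K)) p := by
    refine derivation_eqOn_supported (fun v hv => ?_) hp
    simp only [Function.comp_apply, Derivation.commutator_apply, Derivation.zero_apply,
      sub_eq_zero]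
    cases v with
    | x => simp [h.hDx]
    | y => simp [h.hDy]
    | u i => rw [h.hDu, apply_X_u, apply_X_u, Function.iterate_succ_apply']
    | ubar j =>
      obtain rfl := ubar_mem_lowVars_iff.mp hv
      rw [h.hDubar, apply_X_ubar, Function.iterate_zero_apply, apply_F hF hg,
        Function.iterate_one]
  rwa [Derivation.commutator_apply, Derivation.zero_apply, sub_eq_zero] at hlie

theorem apply_iterate_D_F (h : IsTotalDerPair F D Dbar) (hF : F ∈ supported K Fvars)
    (hg : IsSymmetry F D Dbar g) (i : ℕ) :
    evolutionaryDerivation D Dbar g ((⇑D)^[i] F) = Dbar ((⇑D)^[i + 1] g) := by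
  have hcomm : Function.Commute (⇑D) (⇑Dbar) :=
    Derivation.apply_comm_of_lie_eq_zero h.lie_eq_zero
  induction i with
  | zero => rw [Function.iterate_zero_apply, apply_F hF hg, Function.iterate_one, hcomm]
  | succ i ih =>
    have hmem : (⇑D)^[i] F ∈ supported K lowVars :=
      ((h.mapsTo_supported_lowVars hF).iterate i) (supported_mono Fvars_subset_lowVars hF)
    rw [Function.iterate_succ_apply', apply_D_of_mem_supported_lowVars h hF hg hmem, ih,
      hcomm, ← Function.iterate_succ_apply' (⇑D)]

theorem lie_Dbar_eq_zero (h : IsTotalDerPair F D Dbar) (hF : F ∈ supported K Fvars)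
    (hg : IsSymmetry F D Dbar g) : ⁅evolutionaryDerivation D Dbar g, Dbar⁆ = 0 := by
  refine derivation_ext fun v => ?_
  rw [Derivation.commutator_apply, Derivation.zero_apply, sub_eq_zero]
  cases v with
  | x => simp [h.hDbarx]
  | y => simp [h.hDbary]
  | u i =>
    cases i with
    | zero => simp [h.hDbaru0]
    | succ i => rw [h.hDbaru, apply_iterate_D_F h hF hg, apply_X_u]
  | ubar j => rw [h.hDbarubar, apply_X_ubar, apply_X_ubar, Function.iterate_succ_apply' _ (j + 1)]

theorem _root_.frechet_eq_evolutionaryDerivation_apply {W : RR K} (hW : W ∈ Fcal K) :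
    frechet D W g = evolutionaryDerivation D Dbar g W := by
  have hu : Set.InjOn Var.u (Var.u ⁻¹' W.vars) := fun _ _ _ _ hij => Var.u.inj hij
  calc frechet D W g
      = ∑ i ∈ W.vars.preimage Var.u hu,
          pderiv (.u i) W * evolutionaryDerivation D Dbar g (X (.u i)) := by
        simp only [apply_X_u]
        refine finsum_eq_sum_of_support_subset _ fun i hi => ?_
        rw [Finset.mem_coe, Finset.mem_preimage]
        by_contra hiW
        exact hi (by simp [pderiv_eq_zero_of_notMem_vars hiW])
    _ = ∑ v ∈ W.vars, pderiv v W * evolutionaryDerivation D Dbar g (X v) := by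
        refine Finset.sum_preimage _ _ hu
          (fun v => pderiv v W * evolutionaryDerivation D Dbar g (X v)) fun v hv hvu => ?_
        cases v with
        | x => simp
        | y => simp
        | u i => exact absurd ⟨i, rfl⟩ hvu
        | ubar j => exact absurd rfl (mem_supported.mp hW hv j)
    _ = evolutionaryDerivation D Dbar g W :=
        (derivation_apply_eq_sum_pderiv_mul _ subset_rfl).symm

end evolutionaryDerivation

/-- writing L = W_* ∘ M (W an x-integral, M an x-symmetry driver) in
normal form Σ μ_i·D^i, all coefficients μ_i are x-integrals; in particular L maps
x-integrals to x-integrals. -/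
theorem statement10
    (F : RR K) (hF : F ∈ MvPolynomial.supported K Fvars)
    (D Dbar : Derivation K (RR K) (RR K)) (hDD : IsTotalDerPair F D Dbar)
    (k : ℕ) (ξ : ℕ → RR K) (hdrv : IsDriver F D Dbar k ξ)
    (W : RR K) (hWF : W ∈ Fcal K) (hWint : Dbar W = 0) :
    (∀ (m : ℕ) (μ : ℕ → RR K),
      (∀ a : RR K,
        frechet D W (opApply ⇑D ξ k a) = ∑ i ∈ Finset.range (m + 1), μ i * (⇑D)^[i] a) →
      ∀ i ≤ m, Dbar (μ i) = 0) ∧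
    (∀ V : RR K, Dbar V = 0 → Dbar (frechet D W (opApply ⇑D ξ k V)) = 0) := by
  have hL : ∀ V : RR K, Dbar V = 0 → Dbar (frechet D W (opApply ⇑D ξ k V)) = 0 := by
    intro V hV
    have hlie := evolutionaryDerivation.lie_Dbar_eq_zero hDD hF (hdrv.2 V hV)
    rw [frechet_eq_evolutionaryDerivation_apply hWF,
      ← Derivation.apply_comm_of_lie_eq_zero hlie, hWint, map_zero]
  refine ⟨fun m μ hμ => Derivation.apply_coeff_eq_zero_of_forall_apply_pow D Dbar hDD.hDx
    hDD.hDbarx fun n => ?_, hL⟩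
  rw [← hμ]
  exact hL _ (by simp [Derivation.leibniz_pow, hDD.hDbarx])
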